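/- arXiv:2401.09293 — 4 statements merged into one kernel-verified Lean document; each statement's English description precedes it below -/
import Mathlib

section
/- Let (M,d) be a metric space and S ⊆ M a nonempty subset. Let α > 0 and let κ satisfy 0 < κ < α/(4+α). Suppose ξ, z, x ∈ M and r ≥ 0 satisfy: d(ξ,z) ≤ (((1+α) - (3+α)κ)/(1+κ))·infDist(z,S), d(z,x) ≤ r, and r ≤ κ·infDist(x,S). Then the closed ball of center x and radius r is contained in the non-tangential cone Γ_α(ξ) := {p ∈ M : d(ξ,p) ≤ (1+α)·infDist(p,S)}. -/
/-- In a metric space with a nonempty subset `S`, with `α > 0` and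
`0 < κ < α/(4+α)`, if `d(ξ,z) ≤ (((1+α)-(3+α)κ)/(1+κ))·d(z,S)`, `d(z,x) ≤ r`
and `r ≤ κ·d(x,S)`, then the closed ball `B̄(x,r)` is contained in the
non-tangential cone `Γ_α(ξ) = {p : d(ξ,p) ≤ (1+α)·d(p,S)}`. -/
theorem rmvp_ball_in_cone {M : Type*} [MetricSpace M] (S : Set M) (hS : S.Nonempty)
    (α κ : ℝ) (hα : 0 < α) (hκ0 : 0 < κ) (hκ : κ < α / (4 + α))
    (ξ z x : M) (r : ℝ) (hr : 0 ≤ r)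
    (hξz : dist ξ z ≤ (((1 + α) - (3 + α) * κ) / (1 + κ)) * Metric.infDist z S)
    (hzx : dist z x ≤ r) (hrκ : r ≤ κ * Metric.infDist x S) :
    Metric.closedBall x r ⊆ {p : M | dist ξ p ≤ (1 + α) * Metric.infDist p S} := by
  intro p hp
  simp only [Metric.mem_closedBall] at hp
  simp only [Set.mem_setOf_eq]
  have hκ1 : (0:ℝ) < 1 + κ := by linarith
  have hA : 0 < (1 + α) - (3 + α) * κ := by
    have h4α : (0:ℝ) < 4 + α := by linarith
    have : κ * (4 + α) < α := (lt_div_iff₀ h4α).mp hκ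
    nlinarith
  have h4' : (1 + κ) * dist ξ z ≤ ((1 + α) - (3 + α) * κ) * Metric.infDist z S := by
    rw [div_mul_eq_mul_div] at hξz
    nlinarith [(le_div_iff₀ hκ1).mp hξz]
  have htri : dist ξ p ≤ dist ξ z + dist z x + dist x p := dist_triangle4 ξ z x p
  have hzS : Metric.infDist z S ≤ Metric.infDist x S + dist z x :=
    Metric.infDist_le_infDist_add_dist
  have hxS : Metric.infDist x S ≤ Metric.infDist p S + dist x p :=
    Metric.infDist_le_infDist_add_dist
  have hxp : dist x p ≤ r := by rwa [dist_comm]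
  have hD0 : 0 ≤ Metric.infDist x S := Metric.infDist_nonneg
  have hPp : Metric.infDist x S - r ≤ Metric.infDist p S := by linarith
  have hint1 : (1 + α) * (1 + κ) * (Metric.infDist x S - r) ≤
      (1 + α) * (1 + κ) * Metric.infDist p S :=
    mul_le_mul_of_nonneg_left hPp (by positivity)
  have hint2 : (1 + α - (3 + α) * κ) * Metric.infDist z S ≤
      (1 + α - (3 + α) * κ) * (Metric.infDist x S + dist z x) :=
    mul_le_mul_of_nonneg_left hzS hA.le
  have hint3 : (1 + κ) * dist ξ p ≤ (1 + κ) * (dist ξ z + dist z x + dist x p) :=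
    mul_le_mul_of_nonneg_left htri hκ1.le
  nlinarith [hint1, hint2, hint3, hrκ, mul_nonneg hκ0.le (sub_nonneg.mpr hzx),
    mul_nonneg hκ0.le (sub_nonneg.mpr hxp), mul_nonneg hα.le (sub_nonneg.mpr hzx),
    mul_nonneg hα.le (sub_nonneg.mpr hxp)]
end

section
/- Let D = {z ∈ ℂ : |z| < 1} be the open unit disk. Let φ : D → ℝ be a bounded continuous function with φ ≥ 0 on D, satisfying the sub-mean value property: φ(z) ≤ (1/2π)∫₀^{2π} φ(z + re^{iθ}) dθ whenever the closed disk of center z and radius r is contained in D. Suppose that for almost every θ ∈ [0,2π) (with respect to Lebesgue measure), φ(z_n) → 0 for every sequence (z_n) in D with z_n → e^{iθ} and |e^{iθ} − z_n|/(1 − |z_n|) → 1. Then φ ≡ 0 on D. -/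
open MeasureTheory Metric Complex Filter

noncomputable def circleAvg (u : ℂ → ℝ) (z : ℂ) (r : ℝ) : ℝ :=
  (2 * Real.pi)⁻¹ * ∫ θ in (0:ℝ)..(2 * Real.pi), u (z + r * Complex.exp (θ * Complex.I))

def unitDisk : Set ℂ := Metric.ball 0 1

/-!
Let `A t` be the mean of `φ` over the circle `‖z‖ = t`. Averaging `φ` over rotations yields the
radial function `z ↦ A ‖z‖`, which still has the sub-mean value property (by Fubini); by the
maximum principle on the disk `‖z‖ ≤ t` it is bounded there by its value `A t` on the boundary,
so `A` is nondecreasing on `[0, 1)`. Radial sequences converge normally, so by dominated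
convergence `A t → 0` along a sequence `t → 1`. Hence `A ≡ 0`, and a nonnegative continuous
function with zero mean on a circle vanishes on it.
-/

open Set
open Real (circleAverage circleAverage_def circleAverage_eq_integral_add circleAverage_mono
  two_pi_pos)
open scoped Real Topology

lemma circleAvg_eq_circleAverage (u : ℂ → ℝ) (z : ℂ) (r : ℝ) :
    circleAvg u z r = circleAverage u z r := rfl

def SubMeanValueOn (u : ℂ → ℝ) (U : Set ℂ) : Prop :=
  ∀ z r, 0 < r → closedBall z r ⊆ U → u z ≤ circleAverage u z r

lemma mul_circleMap (v c : ℂ) (r θ : ℝ) :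
    v * circleMap c r θ = circleMap (v * c) (‖v‖ * r) (θ + arg v) := by
  have hv := norm_mul_exp_arg_mul_I v
  simp only [circleMap]
  push_cast
  rw [add_mul, Complex.exp_add]
  linear_combination (-(r * exp (θ * I))) * hv

lemma circleAverage_comp_mul_left (u : ℂ → ℝ) (v c : ℂ) (r : ℝ) :
    circleAverage (fun w => u (v * w)) c r = circleAverage u (v * c) (‖v‖ * r) := by
  simp only [circleAverage_eq_integral_add (arg v) (f := u), circleAverage_def, mul_circleMap]

lemma circleAverage_lt_circleAverage {f g : ℂ → ℝ} {c : ℂ} {r : ℝ}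
    (hf : ContinuousOn f (sphere c |r|)) (hg : ContinuousOn g (sphere c |r|))
    (hle : ∀ x ∈ sphere c |r|, f x ≤ g x) {x : ℂ} (hx : x ∈ sphere c |r|) (hlt : f x < g x) :
    circleAverage f c r < circleAverage g c r := by
  rw [← image_circleMap_Ioc] at hx
  obtain ⟨θ, hθ, rfl⟩ := hx
  have hcirc {h : ℂ → ℝ} (hh : ContinuousOn h (sphere c |r|)) :
      ContinuousOn (fun t => h (circleMap c r t)) (Icc 0 (2 * π)) :=
    (hh.comp_continuous (continuous_circleMap c r) (circleMap_mem_sphere' c r)).continuousOn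
  simp only [circleAverage_def, smul_eq_mul]
  refine mul_lt_mul_of_pos_left ?_ (by positivity)
  exact intervalIntegral.integral_lt_integral_of_continuousOn_of_le_of_exists_lt two_pi_pos
    (hcirc hf) (hcirc hg) (fun t _ => hle _ (circleMap_mem_sphere' c r t))
    ⟨θ, Ioc_subset_Icc_self hθ, hlt⟩

lemma eqOn_zero_of_circleAverage_nonpos {f : ℂ → ℝ} {c : ℂ} {r : ℝ}
    (hf : ContinuousOn f (sphere c |r|)) (hf₀ : ∀ x ∈ sphere c |r|, 0 ≤ f x)
    (hle : circleAverage f c r ≤ 0) : EqOn f 0 (sphere c |r|) := by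
  refine fun x hx => le_antisymm (not_lt.mp fun hpos => ?_) (hf₀ x hx)
  have hlt := circleAverage_lt_circleAverage continuousOn_const hf hf₀ hx hpos
  rw [Real.circleAverage_const] at hlt
  exact hlt.not_ge hle

lemma circleIntegrable_circleAverage {F : ℂ → ℂ → ℝ} {c c' : ℂ} {r r' : ℝ}
    (hF : Continuous fun p : ℝ × ℝ => F (circleMap c r p.1) (circleMap c' r' p.2)) :
    CircleIntegrable (fun z => circleAverage (F z) c' r') c r := by
  simp only [CircleIntegrable, circleAverage_def]
  exact ((intervalIntegral.continuous_parametric_intervalIntegral_of_continuous' (μ := volume)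
    (f := fun α γ => F (circleMap c r α) (circleMap c' r' γ)) hF 0 (2 * π)).const_smul
    (2 * π)⁻¹).intervalIntegrable _ _

lemma circleAverage_circleAverage_comm {F : ℂ → ℂ → ℝ} {c c' : ℂ} {r r' : ℝ}
    (hF : Continuous fun p : ℝ × ℝ => F (circleMap c r p.1) (circleMap c' r' p.2)) :
    circleAverage (fun z => circleAverage (F z) c' r') c r =
      circleAverage (fun w => circleAverage (fun z => F z w) c r) c' r' := by
  simp only [circleAverage_def, smul_eq_mul, intervalIntegral.integral_const_mul]
  rw [intervalIntegral_intervalIntegral_swap]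
  exact (hF.continuousOn.integrableOn_compact (μ := volume)
    (isCompact_uIcc.prod isCompact_uIcc)).mono_set (prod_mono uIoc_subset_uIcc uIoc_subset_uIcc)

lemma closedBall_mul_subset_ball_zero {v z : ℂ} (hv : ‖v‖ = 1) {r R : ℝ}
    (h : closedBall z r ⊆ ball 0 R) : closedBall (v * z) r ⊆ ball 0 R := by
  intro w hw
  have hv₀ : v ≠ 0 := norm_ne_zero_iff.mp (by rw [hv]; exact one_ne_zero)
  have hmem : v⁻¹ * w ∈ closedBall z r := by
    have hrot : v⁻¹ * w - z = v⁻¹ * (w - v * z) := by field_simp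
    rwa [mem_closedBall, dist_eq_norm, hrot, norm_mul, norm_inv, hv, inv_one, one_mul,
      ← dist_eq_norm]
  simpa [norm_mul, hv] using h hmem

theorem SubMeanValueOn.circleAverage_norm {u : ℂ → ℝ} {R : ℝ} (hu : SubMeanValueOn u (ball 0 R))
    (hc : ContinuousOn u (ball 0 R)) :
    SubMeanValueOn (fun w => circleAverage u 0 ‖w‖) (ball 0 R) := by
  intro z r hr hzr
  have hmem : ∀ α γ, circleMap 0 1 α * circleMap z r γ ∈ ball 0 R := fun α γ => by
    rw [mem_ball_zero_iff, norm_mul, norm_circleMap_zero, abs_one, one_mul, ← mem_ball_zero_iff]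
    exact hzr (sphere_subset_closedBall (circleMap_mem_sphere z hr.le γ))
  have hG : Continuous fun p : ℝ × ℝ => u (circleMap 0 1 p.1 * circleMap z r p.2) :=
    hc.comp_continuous (by fun_prop) fun p => hmem p.1 p.2
  have hrot : ∀ w, circleAverage u 0 ‖w‖ = circleAverage (fun v => u (v * w)) 0 1 := fun w => by
    simp_rw [mul_comm _ w]; rw [circleAverage_comp_mul_left]; simp
  calc circleAverage u 0 ‖z‖ = circleAverage (fun v => u (v * z)) 0 1 := hrot z
    _ ≤ circleAverage (fun v => circleAverage (fun w => u (v * w)) z r) 0 1 := by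
      refine circleAverage_mono ?_ (circleIntegrable_circleAverage (F := fun v w => u (v * w)) hG)
        fun v hv => ?_
      · refine ContinuousOn.circleIntegrable' (hc.comp (continuous_mul_const z).continuousOn ?_)
        intro v hv
        simpa [norm_mul, show ‖v‖ = 1 by simpa using hv] using hzr (mem_closedBall_self hr.le)
      · have hv' : ‖v‖ = 1 := by simpa using hv
        rw [circleAverage_comp_mul_left, hv', one_mul]
        exact hu _ r hr (closedBall_mul_subset_ball_zero hv' hzr)
    _ = circleAverage (fun w => circleAverage (fun v => u (v * w)) 0 1) z r :=
      circleAverage_circleAverage_comm (F := fun v w => u (v * w)) hG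
    _ = circleAverage (fun w => circleAverage u 0 ‖w‖) z r := by simp_rw [hrot]

lemma dist_circleMap_arg_sub (c z : ℂ) {r : ℝ} (hr : 0 ≤ r) :
    dist (circleMap z r (arg (z - c))) c = dist z c + r := by
  have hpolar := norm_mul_exp_arg_mul_I (z - c)
  have hsub : circleMap z r (arg (z - c)) - c =
      ((dist z c + r : ℝ) : ℂ) * exp (arg (z - c) * I) := by
    simp only [circleMap, dist_eq_norm]
    push_cast
    linear_combination -hpolar
  rw [dist_eq_norm, hsub, norm_mul, norm_exp_ofReal_mul_I, mul_one, norm_real,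
    Real.norm_of_nonneg (by positivity)]

theorem SubMeanValueOn.exists_mem_sphere_le {v : ℂ → ℝ} {U : Set ℂ} (hv : SubMeanValueOn v U)
    {c : ℂ} {t : ℝ} (hU : closedBall c t ⊆ U) (hc : ContinuousOn v (closedBall c t))
    {z : ℂ} (hz : z ∈ closedBall c t) : ∃ w ∈ sphere c t, v z ≤ v w := by
  obtain ⟨z₁, hz₁, hmax⟩ := (isCompact_closedBall c t).exists_isMaxOn ⟨z, hz⟩ hc
  have hS : IsCompact (closedBall c t ∩ v ⁻¹' {v z₁}) :=
    (isCompact_closedBall c t).of_isClosed_subset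
      (hc.preimage_isClosed_of_isClosed isClosed_closedBall isClosed_singleton) inter_subset_left
  obtain ⟨z₀, ⟨hz₀, hvz₀ : v z₀ = v z₁⟩, hfar⟩ :=
    hS.exists_isMaxOn (f := fun x => dist x c) ⟨z₁, hz₁, rfl⟩ (by fun_prop)
  refine ⟨z₀, ?_, (hmax hz).trans_eq hvz₀.symm⟩
  -- If the maximiser `z₀` farthest from `c` were interior, the sub-mean value property on the
  -- circle about `z₀` touching `sphere c t` would make a farther point of that circle a maximiser.
  by_contra hne
  have hr : 0 < t - dist z₀ c := sub_pos.mpr (lt_of_le_of_ne hz₀ hne)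
  set r := t - dist z₀ c
  have hball : closedBall z₀ r ⊆ closedBall c t := closedBall_subset_closedBall' (by simp [r])
  have hsphere : sphere z₀ |r| ⊆ closedBall c t := by
    rw [abs_of_pos hr]; exact sphere_subset_closedBall.trans hball
  set w := circleMap z₀ r (arg (z₀ - c))
  have hw : w ∈ sphere z₀ |r| := circleMap_mem_sphere' _ _ _
  have hwc : dist w c = t := by rw [dist_circleMap_arg_sub c z₀ hr.le]; simp [r]
  have hvw : v w = v z₀ := by
    by_contra hvw
    have hlt := circleAverage_lt_circleAverage (hc.mono hsphere) continuousOn_const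
      (fun x hx => (hmax (hsphere hx)).trans_eq hvz₀.symm) hw
      (lt_of_le_of_ne ((hmax (hsphere hw)).trans_eq hvz₀.symm) hvw)
    rw [Real.circleAverage_const] at hlt
    exact hlt.not_ge (hv z₀ r hr (hball.trans hU))
  have hfar_w : dist w c ≤ dist z₀ c := hfar ⟨hsphere hw, hvw.trans hvz₀⟩
  linarith

theorem SubMeanValueOn.monotoneOn_circleAverage {u : ℂ → ℝ} {R : ℝ}
    (hu : SubMeanValueOn u (ball 0 R)) (hc : ContinuousOn u (ball 0 R)) :
    MonotoneOn (circleAverage u 0) (Ico 0 R) := by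
  intro s hs t ht hst
  have hA : ContinuousOn (fun w : ℂ => circleAverage u 0 ‖w‖) (ball 0 R) := by
    refine (Real.ContinuousOn.circleAverage (s := Ico 0 R) (hc.mono fun z hz => ?_)
      fun r hr => hr.1).comp continuous_norm.continuousOn fun z hz => ?_
    · simpa using hz.2
    · simpa using hz
  obtain ⟨w, hw, hle⟩ := (hu.circleAverage_norm hc).exists_mem_sphere_le
    (closedBall_subset_ball ht.2) (hA.mono (closedBall_subset_ball ht.2)) (z := s)
    (by simpa [abs_of_nonneg hs.1] using hst)
  simpa [abs_of_nonneg hs.1, mem_sphere_zero_iff_norm.mp hw] using hle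

theorem tendsto_circleAverage_of_ae_tendsto {f : ℂ → ℝ} {c : ℂ} {s : ℕ → ℝ} {M : ℝ}
    (hf : ∀ n, CircleIntegrable f c (s n)) (hbd : ∀ n θ, |f (circleMap c (s n) θ)| ≤ M)
    (hlim : ∀ᵐ θ ∂volume.restrict (Ioc 0 (2 * π)),
      Tendsto (fun n => f (circleMap c (s n) θ)) atTop (𝓝 0)) :
    Tendsto (fun n => circleAverage f c (s n)) atTop (𝓝 0) := by
  rw [ae_restrict_iff' measurableSet_Ioc, ← uIoc_of_le two_pi_pos.le] at hlim
  have := intervalIntegral.tendsto_integral_filter_of_dominated_convergence (fun _ => M)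
    (Eventually.of_forall fun n => (hf n).def'.aestronglyMeasurable)
    (Eventually.of_forall fun n => ae_of_all _ fun θ _ => hbd n θ) intervalIntegrable_const hlim
  simpa [circleAverage_def] using this.const_smul (2 * π)⁻¹

lemma tendsto_circleMap_zero_of_tendsto_one {s : ℕ → ℝ} (hs : Tendsto s atTop (𝓝 1)) (θ : ℝ) :
    Tendsto (fun n => circleMap 0 (s n) θ) atTop (𝓝 (exp (θ * I))) := by
  simpa [circleMap] using ((continuous_ofReal.tendsto 1).comp hs).mul_const (exp (θ * I))

lemma norm_exp_sub_circleMap_div_eq_one {s : ℝ} (hs : s ∈ Ico 0 1) (θ : ℝ) :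
    ‖exp (θ * I) - circleMap 0 s θ‖ / (1 - ‖circleMap 0 s θ‖) = 1 := by
  have hsub : exp (θ * I) - circleMap 0 s θ = ((1 - s : ℝ) : ℂ) * exp (θ * I) := by
    simp only [circleMap]; push_cast; ring
  rw [hsub, norm_mul, norm_exp_ofReal_mul_I, mul_one, norm_real, norm_circleMap_zero,
    Real.norm_of_nonneg (sub_nonneg.mpr hs.2.le), abs_of_nonneg hs.1]
  exact div_self (sub_pos.mpr hs.2).ne'

/-- vanishing case of the `L^∞` maximum principle for the unit
disk: a nonnegative bounded continuous function on `D` with the sub-mean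
value property whose normal boundary limits vanish a.e. (i.e. `φ(z_n) → 0`
for every sequence `z_n → e^{iθ}` with `|e^{iθ}-z_n|/(1-|z_n|) → 1`, for a.e.
`θ`) is identically zero. -/
theorem vanishing_normal_limits_disk (φ : ℂ → ℝ)
    (hbd : ∃ M : ℝ, ∀ z ∈ unitDisk, |φ z| ≤ M)
    (hcont : ContinuousOn φ unitDisk)
    (hnonneg : ∀ z ∈ unitDisk, 0 ≤ φ z)
    (hsub : ∀ z : ℂ, ∀ r : ℝ, 0 < r → Metric.closedBall z r ⊆ unitDisk →
      φ z ≤ circleAvg φ z r)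
    (hlim : ∀ᵐ (θ : ℝ) ∂((volume : Measure ℝ).restrict (Set.Ico 0 (2 * Real.pi))),
      ∀ z : ℕ → ℂ, (∀ n, z n ∈ unitDisk) →
        Tendsto z atTop (nhds (Complex.exp (θ * Complex.I))) →
        Tendsto (fun n => ‖Complex.exp (θ * Complex.I) - z n‖ /
          (1 - ‖z n‖)) atTop (nhds 1) →
        Tendsto (fun n => φ (z n)) atTop (nhds 0)) :
    ∀ z ∈ unitDisk, φ z = 0 := by
  obtain ⟨M, hbd⟩ := hbd
  have hφ : SubMeanValueOn φ unitDisk := by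
    simpa only [SubMeanValueOn, circleAvg_eq_circleAverage] using hsub
  intro z hz
  have hz1 : ‖z‖ < 1 := mem_ball_zero_iff.mp hz
  obtain ⟨s, -, hs, hs1⟩ := exists_seq_strictMono_tendsto' hz1
  have hs' : ∀ n, s n ∈ Ico 0 1 := fun n => ⟨(norm_nonneg z).trans (hs n).1.le, (hs n).2⟩
  have hdisk : ∀ n θ, circleMap 0 (s n) θ ∈ unitDisk := fun n θ => by
    simpa [unitDisk, abs_of_nonneg (hs' n).1] using (hs' n).2
  have hA : Tendsto (fun n => circleAverage φ 0 (s n)) atTop (𝓝 0) := by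
    refine tendsto_circleAverage_of_ae_tendsto
      (fun n => (hcont.comp_continuous (continuous_circleMap 0 _) (hdisk n)).intervalIntegrable _ _)
      (fun n θ => hbd _ (hdisk n θ)) ?_
    rw [← Measure.restrict_congr_set Ico_ae_eq_Ioc]
    filter_upwards [hlim] with θ hθ
    exact hθ _ (hdisk · θ) (tendsto_circleMap_zero_of_tendsto_one hs1 θ)
      (tendsto_const_nhds.congr fun n => (norm_exp_sub_circleMap_div_eq_one (hs' n) θ).symm)
  have hAz : circleAverage φ 0 ‖z‖ ≤ 0 := ge_of_tendsto' hA fun n =>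
    hφ.monotoneOn_circleAverage hcont ⟨norm_nonneg z, hz1⟩ (hs' n) (hs n).1.le
  have hsphere : sphere 0 |‖z‖| ⊆ unitDisk := by
    rw [abs_norm]; exact sphere_subset_ball hz1
  exact eqOn_zero_of_circleAverage_nonpos (hcont.mono hsphere) (fun x hx => hnonneg x (hsphere hx))
    hAz (by simp)
end

section
/- Let D = {z ∈ ℂ : |z| < 1} be the open unit disk and fix κ with 0 < κ < 1. Let u : D → ℝ be a bounded continuous function such that for every z ∈ D there exists ρ(z) with 0 < ρ(z) ≤ κ·(1−|z|) and u(z) = (1/2π)∫₀^{2π} u(z + ρ(z)e^{iθ}) dθ. For z ∈ D, let 𝓕_z be the set of pairs (x,r) with x ∈ D, 0 < r ≤ κ·(1−|x|), |z − x| < r, and u(x) = (1/2π)∫₀^{2π} u(x + re^{iθ}) dθ, and define v(z) := sup over (x,r) ∈ 𝓕_z of h_{x,r}(z), where h_{x,r}(z) = (1/2π)∫₀^{2π} u(x + re^{iθ})·(r² − |z − x|²)/|x + re^{iθ} − z|² dθ is the harmonic extension of u to the disk B(x,r). Then: (a) for every z ∈ D the supremum is attained, i.e., there exists (x,r) ∈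 𝓕_z with v(z) = h_{x,r}(z); (b) u(z) ≤ v(z) for all z ∈ D; (c) v is bounded on D; (d) v is continuous on D; and (e) v satisfies the sub-mean value property: v(z) ≤ (1/2π)∫₀^{2π} v(z + se^{iθ}) dθ whenever the closed disk of center z and radius s is contained in D. -/
open MeasureTheory Metric Complex Filter

/-- The harmonic extension (Poisson integral) of `u` to the disk `B(x,r)`,
evaluated at `z`:
`h_{x,r}(z) = (1/2π)∫₀^{2π} u(x+re^{iθ})·(r²-|z-x|²)/|x+re^{iθ}-z|² dθ`. -/
noncomputable def harmExt (u : ℂ → ℝ) (x : ℂ) (r : ℝ) (z : ℂ) : ℝ :=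
  (2 * Real.pi)⁻¹ * ∫ θ in (0:ℝ)..(2 * Real.pi),
    u (x + r * Complex.exp (θ * Complex.I)) *
      ((r ^ 2 - ‖z - x‖ ^ 2) /
        ‖x + r * Complex.exp (θ * Complex.I) - z‖ ^ 2)

/-- The family `𝓕_z` of admissible pairs `(x,r)`: `x ∈ D`, `0 < r ≤ κ(1-|x|)`,
`z ∈ B(x,r)`, and `u(x)` equals the mean value of `u` on `∂B(x,r)`. -/
def admissiblePairs (u : ℂ → ℝ) (κ : ℝ) (z : ℂ) : Set (ℂ × ℝ) :=
  {p | p.1 ∈ unitDisk ∧ 0 < p.2 ∧ p.2 ≤ κ * (1 - ‖p.1‖) ∧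
    ‖z - p.1‖ < p.2 ∧ u p.1 = circleAvg u p.1 p.2}

/-- The auxiliary subharmonic function
`v(z) = sup { h_{x,r}(z) : (x,r) ∈ 𝓕_z }`. -/
noncomputable def vFun (u : ℂ → ℝ) (κ : ℝ) (z : ℂ) : ℝ :=
  sSup ((fun p : ℂ × ℝ => harmExt u p.1 p.2 z) '' admissiblePairs u κ z)

/-!
`v` is a supremum of Poisson integrals `h_{x,r}`, each bounded by `sup |u|` and harmonic in its
disk. Admissible pairs form a relatively compact family, and along a convergent sequence of pairs
either the limit circle still surrounds the limit point, giving again an admissible pair (the mean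
value identity passes to the limit), or the point approaches the limit circle, where the Poisson
kernel concentrates and `h_{x,r}(z) → u(z)`, the value of the pair `(z, ρ(z))`. This yields
attainment of the supremum and upper semicontinuity of `v`; lower semicontinuity holds because `v`
dominates, near `z`, the continuous function `h_{x,r}` attaining `v z`. Attainment also gives the
sub-mean value property of `v` on small circles, and the maximum principle for such functions
compares `v` with its Poisson integral on any disk in `D`.
-/

open Real InnerProductSpace Set Topology

section PoissonIntegral

variable {f : ℂ → ℝ} {x z c : ℂ} {r t : ℝ}

lemma harmExt_eq_circleAverage_poissonKernel (f : ℂ → ℝ) (x : ℂ) (r : ℝ) (z : ℂ) :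
    harmExt f x r z = circleAverage (poissonKernel x z • f) x r := by
  change circleAverage (fun ζ ↦ f ζ * ((r ^ 2 - ‖z - x‖ ^ 2) / ‖ζ - z‖ ^ 2)) x r = _
  refine circleAverage_congr_sphere fun ζ hζ ↦ ?_
  rw [mem_sphere_iff_norm] at hζ
  simp [poissonKernel, hζ, sq_abs, mul_comm]

lemma poissonKernel_nonneg {ζ : ℂ} (h : ‖z - x‖ ≤ ‖ζ - x‖) : 0 ≤ poissonKernel x z ζ :=
  div_nonneg (sub_nonneg.2 (pow_le_pow_left₀ (norm_nonneg _) h 2)) (sq_nonneg _)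

lemma poissonKernel_le {ζ : ℂ} {δ : ℝ} (hδ : 0 < δ) (hζz : δ ≤ ‖ζ - z‖)
    (h : ‖z - x‖ ≤ ‖ζ - x‖) :
    poissonKernel x z ζ ≤ (‖ζ - x‖ ^ 2 - ‖z - x‖ ^ 2) / δ ^ 2 := by
  rw [poissonKernel, sub_sub_sub_cancel_right]
  exact div_le_div_of_nonneg_left (sub_nonneg.2 (pow_le_pow_left₀ (norm_nonneg _) h 2))
    (by positivity) (pow_le_pow_left₀ hδ.le hζz 2)

lemma continuousOn_poissonKernel (hz : z ∈ ball x r) :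
    ContinuousOn (poissonKernel x z) (sphere x |r|) := by
  have hne : ∀ ζ ∈ sphere x |r|, ‖(ζ - x) - (z - x)‖ ^ 2 ≠ 0 := fun ζ hζ ↦ by
    rw [sub_sub_sub_cancel_right, pow_ne_zero_iff two_ne_zero, norm_ne_zero_iff, sub_ne_zero]
    rintro rfl
    rw [mem_sphere, abs_of_pos (pos_of_mem_ball hz)] at hζ
    exact (mem_ball.1 hz).ne hζ
  unfold poissonKernel
  fun_prop (disch := assumption)

lemma circleAverage_poissonKernel (hz : z ∈ ball x r) :
    circleAverage (poissonKernel x z) x r = 1 := by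
  have h := (harmonicOnNhd_const (1 : ℝ)).circleAverage_poissonKernel_smul hz
  convert h using 2
  ext; simp

lemma harmExt_const (hz : z ∈ ball x r) (a : ℝ) : harmExt (fun _ ↦ a) x r z = a := by
  have h : poissonKernel x z • (fun _ ↦ a) = a • poissonKernel x z := by
    ext; simp [mul_comm]
  rw [harmExt_eq_circleAverage_poissonKernel, h, circleAverage_smul, circleAverage_poissonKernel hz,
    smul_eq_mul, mul_one]

lemma harmExt_mono {g : ℂ → ℝ} (hz : z ∈ ball x r) (hf : CircleIntegrable f x r)
    (hg : CircleIntegrable g x r) (h : ∀ ζ ∈ sphere x r, f ζ ≤ g ζ) :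
    harmExt f x r z ≤ harmExt g x r z := by
  have hP := continuousOn_poissonKernel hz
  rw [harmExt_eq_circleAverage_poissonKernel, harmExt_eq_circleAverage_poissonKernel]
  refine circleAverage_mono (hf.continuousOn_smul hP) (hg.continuousOn_smul hP) fun ζ hζ ↦ ?_
  rw [abs_of_pos (pos_of_mem_ball hz)] at hζ
  have hζx : ‖z - x‖ ≤ ‖ζ - x‖ := by
    rw [mem_sphere_iff_norm.1 hζ]; exact (mem_ball_iff_norm.1 hz).le
  exact mul_le_mul_of_nonneg_left (h ζ hζ) (poissonKernel_nonneg hζx)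

lemma abs_harmExt_le {C : ℝ} (hz : z ∈ ball x r) (hf : CircleIntegrable f x r)
    (hb : ∀ ζ ∈ sphere x r, |f ζ| ≤ C) : |harmExt f x r z| ≤ C := by
  have hconst (a : ℝ) : CircleIntegrable (fun _ ↦ a) x r := circleIntegrable_const a x r
  refine abs_le.2 ⟨?_, ?_⟩
  · calc -C = harmExt (fun _ ↦ -C) x r z := (harmExt_const hz _).symm
      _ ≤ harmExt f x r z := harmExt_mono hz (hconst _) hf fun ζ hζ ↦ (abs_le.1 (hb ζ hζ)).1
  · calc harmExt f x r z ≤ harmExt (fun _ ↦ C) x r z :=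
          harmExt_mono hz hf (hconst _) fun ζ hζ ↦ (abs_le.1 (hb ζ hζ)).2
      _ = C := harmExt_const hz _

lemma harmExt_self (hr : r ≠ 0) : harmExt f x r x = circleAverage f x r := by
  rw [harmExt_eq_circleAverage_poissonKernel]
  refine circleAverage_congr_sphere fun ζ hζ ↦ ?_
  have hζx : ‖ζ - x‖ ≠ 0 := by
    rw [mem_sphere_iff_norm.1 hζ]; exact abs_ne_zero.2 hr
  simp [poissonKernel, hζx]

/-- The error `ε + L B` splits the circle into the arc within `δ` of `z`, where `f` is close
to `f z`, and the rest, where the kernel is at most `B = (r² - |z - x|²) / δ²`. -/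
lemma abs_harmExt_sub_le {ε δ L : ℝ} (hz : z ∈ ball x r) (hf : CircleIntegrable f x r)
    (hε : 0 ≤ ε) (hδ : 0 < δ) (hnear : ∀ ζ ∈ sphere x r, ‖ζ - z‖ ≤ δ → |f ζ - f z| ≤ ε)
    (hfar : ∀ ζ ∈ sphere x r, |f ζ - f z| ≤ L) :
    |harmExt f x r z - f z| ≤ ε + L * ((r ^ 2 - ‖z - x‖ ^ 2) / δ ^ 2) := by
  have hr : 0 < r := pos_of_mem_ball hz
  have hzx : ‖z - x‖ < r := mem_ball_iff_norm.1 hz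
  have hP := continuousOn_poissonKernel hz
  set P := poissonKernel x z
  set B := (r ^ 2 - ‖z - x‖ ^ 2) / δ ^ 2
  have hB : 0 ≤ B := div_nonneg (by nlinarith [norm_nonneg (z - x)]) (sq_nonneg _)
  have hL : 0 ≤ L := (abs_nonneg _).trans (hfar (x + r) (by simp [abs_of_pos hr]))
  have hPf : CircleIntegrable (P • f) x r := hf.continuousOn_smul hP
  have hPint : CircleIntegrable P x r := hP.circleIntegrable'
  have hdiff : harmExt f x r z - f z = circleAverage (P • fun ζ ↦ f ζ - f z) x r := by
    have h : (P • fun ζ ↦ f ζ - f z) = P • f - f z • P := by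
      ext ζ
      change P ζ * (f ζ - f z) = P ζ * f ζ - f z * P ζ
      ring
    rw [h, circleAverage_sub hPf (hPint.const_smul), circleAverage_smul,
      circleAverage_poissonKernel hz, harmExt_eq_circleAverage_poissonKernel, smul_eq_mul (f z),
      mul_one]
  rw [hdiff]
  calc |circleAverage (P • fun ζ ↦ f ζ - f z) x r|
      ≤ circleAverage |P • fun ζ ↦ f ζ - f z| x r := abs_circleAverage_le_circleAverage_abs
    _ ≤ circleAverage (ε • P + fun _ ↦ L * B) x r := by
        refine circleAverage_mono ((hf.sub (circleIntegrable_const _ _ _)).continuousOn_smul hP).abs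
          (hPint.const_smul.add (circleIntegrable_const _ _ _)) fun ζ hζ ↦ ?_
        rw [abs_of_pos hr] at hζ
        have hζx : ‖ζ - x‖ = r := mem_sphere_iff_norm.1 hζ
        have hPζ : 0 ≤ P ζ := poissonKernel_nonneg (hζx ▸ hzx.le)
        change |P ζ * (f ζ - f z)| ≤ ε * P ζ + L * B
        rw [abs_mul, abs_of_nonneg hPζ]
        rcases le_or_gt ‖ζ - z‖ δ with hnear' | hfar'
        · nlinarith [mul_le_mul_of_nonneg_left (hnear ζ hζ hnear') hPζ, mul_nonneg hL hB]
        · have hPB := poissonKernel_le (x := x) hδ hfar'.le (by rw [hζx]; exact hzx.le)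
          rw [hζx] at hPB
          nlinarith [mul_le_mul hPB (hfar ζ hζ) (abs_nonneg _) hB, mul_nonneg hε hPζ]
    _ = ε + L * B := by
        rw [circleAverage_add hPint.const_smul (circleIntegrable_const _ _ _), circleAverage_smul,
          circleAverage_poissonKernel hz, circleAverage_const, smul_eq_mul, mul_one]

lemma harmExt_eq_integral (f : ℂ → ℝ) (x : ℂ) (r : ℝ) (z : ℂ) :
    harmExt f x r z = (2 * π)⁻¹ * ∫ θ in (0 : ℝ)..2 * π,
      f (circleMap x r θ) * ((r ^ 2 - ‖z - x‖ ^ 2) / ‖circleMap x r θ - z‖ ^ 2) := rfl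

lemma continuousOn_harmExt {U : Set ℂ} (hf : ContinuousOn f U) :
    ContinuousOn (fun p : ℂ × ℝ × ℂ ↦ harmExt f p.1 p.2.1 p.2.2)
      {p | p.2.2 ∈ ball p.1 p.2.1 ∧ sphere p.1 p.2.1 ⊆ U} := by
  set S := {p : ℂ × ℝ × ℂ | p.2.2 ∈ ball p.1 p.2.1 ∧ sphere p.1 p.2.1 ⊆ U}
  simp only [continuousOn_iff_continuous_domRestrict, harmExt_eq_integral]
  refine continuous_const.mul
    (intervalIntegral.continuous_parametric_intervalIntegral_of_continuous' ?_ _ _)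
  have hc : Continuous fun q : S × ℝ ↦ circleMap q.1.1.1 q.1.1.2.1 q.2 := by
    simp only [circleMap]; fun_prop
  have hU (q : S × ℝ) : circleMap q.1.1.1 q.1.1.2.1 q.2 ∈ U :=
    q.1.2.2 (circleMap_mem_sphere _ (pos_of_mem_ball q.1.2.1).le _)
  have hne (q : S × ℝ) : ‖circleMap q.1.1.1 q.1.1.2.1 q.2 - q.1.1.2.2‖ ^ 2 ≠ 0 := by
    rw [pow_ne_zero_iff two_ne_zero, norm_ne_zero_iff, sub_ne_zero]
    exact circleMap_ne_mem_ball q.1.2.1 q.2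
  exact (hf.comp_continuous hc hU).mul ((by fun_prop : Continuous fun q : S × ℝ ↦
    q.1.1.2.1 ^ 2 - ‖q.1.1.2.2 - q.1.1.1‖ ^ 2).div
    ((hc.sub (by fun_prop : Continuous fun q : S × ℝ ↦ q.1.1.2.2)).norm.pow 2) hne)


lemma tendsto_harmExt {ι : Type*} {l : Filter ι} {U : Set ℂ} {xs zs : ι → ℂ} {rs : ι → ℝ}
    (hf : ContinuousOn f U) (hx : Tendsto xs l (𝓝 x)) (hr : Tendsto rs l (𝓝 r))
    (hz : Tendsto zs l (𝓝 z)) (hzx : z ∈ ball x r) (hU : sphere x r ⊆ U)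
    (hmem : ∀ᶠ i in l, zs i ∈ ball (xs i) (rs i) ∧ sphere (xs i) (rs i) ⊆ U) :
    Tendsto (fun i ↦ harmExt f (xs i) (rs i) (zs i)) l (𝓝 (harmExt f x r z)) := by
  have h := (continuousOn_harmExt hf (x, r, z) ⟨hzx, hU⟩).tendsto.comp
    (tendsto_nhdsWithin_iff.2 ⟨hx.prodMk_nhds (hr.prodMk_nhds hz), hmem⟩)
  exact h

lemma CircleIntegrable.comp_add_center (hf : CircleIntegrable f x r) :
    CircleIntegrable (fun ζ ↦ f (ζ + x)) 0 r := by
  have h : (fun θ ↦ f (circleMap 0 r θ + x)) = fun θ ↦ f (circleMap x r θ) := by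
    ext θ; simp [circleMap, add_comm]
  unfold CircleIntegrable; rw [h]; exact hf

lemma harmExt_eq_re_circleAverage_herglotzRieszKernel (hf : CircleIntegrable f x r)
    (hz : z ∈ ball x r) :
    harmExt f x r z =
      (circleAverage (fun ζ ↦ herglotzRieszKernel 0 (z - x) ζ • (f (ζ + x) : ℂ)) 0 r).re := by
  rw [re_circleAverage_herglotzRieszKernel_smul hf.comp_add_center
      (mem_ball_zero_iff.2 (mem_ball_iff_norm.1 hz)), harmExt_eq_circleAverage_poissonKernel,
    ← circleAverage_map_add_const]
  congr 1
  ext ζ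
  simp [← poissonKernel_eq_re_herglotzRieszKernel, poissonKernel]

lemma harmonicOnNhd_harmExt (hf : CircleIntegrable f x r) :
    HarmonicOnNhd (harmExt f x r) (ball x r) := by
  intro z hz
  have hf' : CircleIntegrable (fun ζ ↦ ((f (ζ + x) : ℝ) : ℂ)) 0 r := by
    have h := hf.comp_add_center
    simp only [CircleIntegrable, intervalIntegrable_iff] at h ⊢
    exact Complex.ofRealCLM.integrable_comp h
  have hG := AnalyticAt.comp (f := fun w ↦ w - x)
    (analyticOnNhd_circleAverage_herglotzRieszKernel_smul hf' (z - x)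
      (mem_ball_zero_iff.2 (mem_ball_iff_norm.1 hz))) (by fun_prop)
  rw [harmonicAt_congr_nhds (Filter.eventually_of_mem (isOpen_ball.mem_nhds hz)
    fun w hw ↦ harmExt_eq_re_circleAverage_herglotzRieszKernel hf hw)]
  exact hG.harmonicAt_re

lemma harmExt_eq_circleAverage (hf : CircleIntegrable f x r) (ht : 0 ≤ t)
    (h : closedBall c t ⊆ ball x r) :
    harmExt f x r c = circleAverage (harmExt f x r) c t := by
  rw [((harmonicOnNhd_harmExt hf).mono (by rwa [abs_of_nonneg ht])).circleAverage_eq]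

lemma tendsto_harmExt_of_norm_sub_eq {ι : Type*} {l : Filter ι} {U : Set ℂ} {xs zs : ι → ℂ}
    {rs : ι → ℝ} (hU : IsOpen U) (hf : ContinuousOn f U) (hx : Tendsto xs l (𝓝 x))
    (hr : Tendsto rs l (𝓝 r)) (hz : Tendsto zs l (𝓝 z)) (hzx : ‖z - x‖ = r)
    (hxU : closedBall x r ⊆ U) (hmem : ∀ᶠ i in l, zs i ∈ ball (xs i) (rs i)) :
    Tendsto (fun i ↦ harmExt f (xs i) (rs i) (zs i)) l (𝓝 (f z)) := by
  obtain ⟨η, hη, hηU⟩ := (isCompact_closedBall x r).exists_cthickening_subset_open hU hxU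
  rw [cthickening_closedBall hη.le (hzx ▸ norm_nonneg _)] at hηU
  have hK : IsCompact (closedBall x (η + r)) := isCompact_closedBall _ _
  obtain ⟨B, hB⟩ := hK.exists_bound_of_continuousOn (hf.mono hηU)
  have hsubK : ∀ᶠ i in l, closedBall (xs i) (rs i) ⊆ closedBall x (η + r) := by
    filter_upwards [Metric.tendsto_nhds.1 hx _ (half_pos hη),
      hr.eventually_lt_const (by linarith : r < r + η / 2)] with i h1 h2
    exact closedBall_subset_closedBall' (by linarith)
  have hzU : z ∈ U := hxU (by rw [mem_closedBall, dist_eq_norm, hzx])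
  have hfz : Tendsto (fun i ↦ f (zs i)) l (𝓝 (f z)) :=
    (hf.continuousAt (hU.mem_nhds hzU)).tendsto.comp hz
  suffices h : Tendsto (fun i ↦ harmExt f (xs i) (rs i) (zs i) - f (zs i)) l (𝓝 0) by
    simpa using h.add hfz
  rw [Metric.tendsto_nhds]
  intro ε hε
  obtain ⟨δ, hδ, hδf⟩ := Metric.uniformContinuousOn_iff.1
    (hK.uniformContinuousOn_of_continuous (hf.mono hηU)) (ε / 2) (half_pos hε)
  -- the kernel bound away from `zs i` goes to `0` as `zs i` approaches the circle
  have hgap : ∀ᶠ i in l, 2 * B * ((rs i ^ 2 - ‖zs i - xs i‖ ^ 2) / (δ / 2) ^ 2) < ε / 2 := by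
    have h := (((hr.pow 2).sub ((hz.sub hx).norm.pow 2)).div_const ((δ / 2) ^ 2)).const_mul (2 * B)
    rw [hzx, sub_self, zero_div, mul_zero] at h
    exact h.eventually_lt_const (half_pos hε)
  filter_upwards [hsubK, hmem, hgap] with i hKi hzi hgi
  have hsph : sphere (xs i) (rs i) ⊆ closedBall x (η + r) := sphere_subset_closedBall.trans hKi
  have hzK : zs i ∈ closedBall x (η + r) := hKi (ball_subset_closedBall hzi)
  rw [dist_zero_right, Real.norm_eq_abs]
  calc |harmExt f (xs i) (rs i) (zs i) - f (zs i)|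
      ≤ ε / 2 + 2 * B * ((rs i ^ 2 - ‖zs i - xs i‖ ^ 2) / (δ / 2) ^ 2) := by
        refine abs_harmExt_sub_le hzi
          ((hf.mono (hsph.trans hηU)).circleIntegrable (pos_of_mem_ball hzi).le) (half_pos hε).le
          (half_pos hδ) (fun ζ hζ hζz ↦ ?_) fun ζ hζ ↦ ?_
        · have h := hδf ζ (hsph hζ) (zs i) hzK (by rw [dist_eq_norm]; linarith)
          rw [Real.dist_eq] at h
          exact h.le
        · have h1 := hB ζ (hsph hζ)
          have h2 := hB _ hzK
          rw [Real.norm_eq_abs] at h1 h2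
          linarith [abs_sub (f ζ) (f (zs i))]
    _ < ε := by linarith

lemma tendsto_harmExt_nhdsWithin_ball {U : Set ℂ} {ζ : ℂ} (hU : IsOpen U)
    (hf : ContinuousOn f U) (hxU : closedBall x r ⊆ U) (hζ : ζ ∈ sphere x r) :
    Tendsto (harmExt f x r) (𝓝[ball x r] ζ) (𝓝 (f ζ)) :=
  tendsto_harmExt_of_norm_sub_eq hU hf tendsto_const_nhds tendsto_const_nhds
    (tendsto_id.mono_left nhdsWithin_le_nhds) (by rw [← dist_eq_norm]; exact mem_sphere.1 hζ)
    hxU self_mem_nhdsWithin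

lemma eq_circleAverage_of_tendsto {ι : Type*} {l : Filter ι} [l.NeBot] {U : Set ℂ}
    {xs : ι → ℂ} {rs : ι → ℝ} (hU : IsOpen U) (hf : ContinuousOn f U) (hx : Tendsto xs l (𝓝 x))
    (hr : Tendsto rs l (𝓝 r)) (hr₀ : 0 < r) (hxU : closedBall x r ⊆ U)
    (hmean : ∀ᶠ i in l, 0 < rs i ∧ sphere (xs i) (rs i) ⊆ U ∧
      f (xs i) = circleAverage f (xs i) (rs i)) :
    f x = circleAverage f x r := by
  have h := tendsto_harmExt hf hx hr hx (mem_ball_self hr₀) (sphere_subset_closedBall.trans hxU)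
    (hmean.mono fun i hi ↦ ⟨mem_ball_self hi.1, hi.2.1⟩)
  rw [harmExt_self hr₀.ne'] at h
  refine tendsto_nhds_unique ((hf.continuousAt (hU.mem_nhds (hxU (mem_closedBall_self hr₀.le))))
    |>.tendsto.comp hx) (h.congr' (hmean.mono fun i hi ↦ ?_))
  rw [harmExt_self hi.1.ne']
  exact hi.2.2.symm

end PoissonIntegral

section MaximumPrinciple

variable {W : ℂ → ℝ} {c : ℂ} {s : ℝ}

lemma eqOn_sphere_of_le_circleAverage {t m : ℝ} (hW : ContinuousOn W (sphere c |t|))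
    (hle : ∀ ζ ∈ sphere c |t|, W ζ ≤ m) (havg : m ≤ circleAverage W c t) :
    EqOn W (fun _ ↦ m) (sphere c |t|) := by
  intro ζ hζ
  by_contra hne
  rw [← image_circleMap_Ioc] at hζ
  obtain ⟨θ, hθ, rfl⟩ := hζ
  have hlt := intervalIntegral.integral_lt_integral_of_continuousOn_of_le_of_exists_lt two_pi_pos
    (hW.comp_continuous (continuous_circleMap c t) (circleMap_mem_sphere' c t)).continuousOn
    continuousOn_const (fun φ _ ↦ hle _ (circleMap_mem_sphere' c t φ))
    ⟨θ, Ioc_subset_Icc_self hθ, (hle _ (circleMap_mem_sphere' c t θ)).lt_of_ne hne⟩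
  rw [intervalIntegral.integral_const, smul_eq_mul, sub_zero] at hlt
  have : circleAverage W c t < m := by
    rw [circleAverage_def, smul_eq_mul, inv_mul_lt_iff₀ two_pi_pos]
    exact hlt
  linarith

lemma eqOn_ball_of_isMaxOn {a : ℂ} (hW : ContinuousOn W (ball c s))
    (hsub : ∀ w ∈ ball c s, ∃ t₀ > 0, ∀ t ∈ Ioo 0 t₀, W w ≤ circleAverage W w t)
    (ha : a ∈ ball c s) (hmax : IsMaxOn W (ball c s) a) :
    EqOn W (fun _ ↦ W a) (ball c s) := by
  set A := ball c s ∩ W ⁻¹' {W a}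
  have hA : IsOpen A := by
    refine isOpen_iff_mem_nhds.2 fun w ⟨hw, hWw⟩ ↦ ?_
    obtain ⟨t₀, ht₀, hsubw⟩ := hsub w hw
    obtain ⟨ε, hε, hεs⟩ := Metric.isOpen_iff.1 isOpen_ball w hw
    refine Filter.mem_of_superset (ball_mem_nhds w (lt_min ht₀ hε)) fun y hy ↦ ?_
    rcases eq_or_ne y w with rfl | hyw
    · exact ⟨hw, hWw⟩
    have ht : 0 < dist y w := dist_pos.2 hyw
    have hyt : dist y w < min t₀ ε := hy
    have hsph : sphere w |dist y w| ⊆ ball c s := by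
      rw [abs_of_pos ht]
      exact sphere_subset_closedBall.trans ((closedBall_subset_ball (lt_of_lt_of_le hyt
        (min_le_right _ _))).trans hεs)
    have hWy := eqOn_sphere_of_le_circleAverage (hW.mono hsph)
      (fun ζ hζ ↦ hmax (hsph hζ)) (hWw ▸ hsubw _ ⟨ht, hyt.trans_le (min_le_left _ _)⟩)
      (by rw [abs_of_pos ht]; exact mem_sphere.2 rfl)
    exact ⟨hεs (ball_subset_ball (min_le_right _ _) hy), hWy⟩
  have hB : IsOpen (ball c s ∩ W ⁻¹' {W a}ᶜ) :=
    hW.isOpen_inter_preimage isOpen_ball isOpen_compl_singleton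
  rcases (convex_ball c s).isPreconnected.subset_or_subset hA hB
      (Set.disjoint_left.2 fun w hwA hwB ↦ hwB.2 hwA.2)
      (fun w hw ↦ (em (W w = W a)).imp (fun h ↦ ⟨hw, h⟩) fun h ↦ ⟨hw, h⟩) with h | h
  · exact fun _ hw ↦ (h hw).2
  · exact absurd rfl (h ha).2

lemma nonpos_of_tendsto_sphere (hW : ContinuousOn W (ball c s)) (hbdd : BddAbove (W '' ball c s))
    (hsub : ∀ w ∈ ball c s, ∃ t₀ > 0, ∀ t ∈ Ioo 0 t₀, W w ≤ circleAverage W w t)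
    (hbdry : ∀ ζ ∈ sphere c s, Tendsto W (𝓝[ball c s] ζ) (𝓝 0)) :
    ∀ w ∈ ball c s, W w ≤ 0 := by
  by_contra! ⟨w₀, hw₀, hpos⟩
  set m := sSup (W '' ball c s)
  have hm : 0 < m := hpos.trans_le (le_csSup hbdd ⟨w₀, hw₀, rfl⟩)
  obtain ⟨y, -, hy, hyW⟩ :=
    exists_seq_tendsto_sSup (⟨W w₀, w₀, hw₀, rfl⟩ : (W '' ball c s).Nonempty) hbdd
  choose q hq hWq using hyW
  obtain ⟨a, ha, φ, hφ, hqa⟩ := (isCompact_closedBall c s).tendsto_subseq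
    fun k ↦ ball_subset_closedBall (hq k)
  have hWqa : Tendsto (W ∘ q ∘ φ) atTop (𝓝 m) := by
    have h := hy.comp hφ.tendsto_atTop
    rwa [show y = W ∘ q from funext fun k ↦ (hWq k).symm] at h
  have hqa' : Tendsto (q ∘ φ) atTop (𝓝[ball c s] a) :=
    tendsto_nhdsWithin_iff.2 ⟨hqa, Filter.Eventually.of_forall fun k ↦ hq (φ k)⟩
  rcases (mem_closedBall.1 ha).lt_or_eq with ha | ha
  · have ha : a ∈ ball c s := ha
    have hWa : W a = m := tendsto_nhds_unique ((hW a ha).tendsto.comp hqa') hWqa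
    have hconst := eqOn_ball_of_isMaxOn hW hsub ha
      fun w hw ↦ hWa ▸ le_csSup hbdd ⟨w, hw, rfl⟩
    have hs : 0 < s := pos_of_mem_ball ha
    have hζ : c + s ∈ sphere c s := by simp [abs_of_pos hs]
    have : (𝓝[ball c s] (c + s)).NeBot := mem_closure_iff_nhdsWithin_neBot.1
      (by rw [closure_ball c hs.ne']; exact sphere_subset_closedBall hζ)
    have hWm : ∀ᶠ w in 𝓝[ball c s] (c + s), m = W w :=
      eventually_nhdsWithin_of_forall fun _ hw ↦ ((hconst hw).trans hWa).symm
    exact hm.ne' (tendsto_nhds_unique (tendsto_const_nhds.congr' hWm) (hbdry _ hζ))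
  · exact hm.ne' (tendsto_nhds_unique hWqa ((hbdry a (mem_sphere.2 ha)).comp hqa'))

end MaximumPrinciple

/-- The restricted mean value property of Definition 1.1, with radius function
`ρ₀(z) = κ (1 - |z|)`. -/
def RestrictedMeanValue (κ : ℝ) (u : ℂ → ℝ) : Prop :=
  ∀ z ∈ unitDisk, ∃ ρ : ℝ, 0 < ρ ∧ ρ ≤ κ * (1 - ‖z‖) ∧ u z = circleAvg u z ρ

section AuxiliaryFunction

variable {κ M : ℝ} {u : ℂ → ℝ} {x z : ℂ} {r : ℝ} {p : ℂ × ℝ}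

lemma closedBall_subset_unitDisk (hκ : κ < 1) (hx : x ∈ unitDisk) (hr : r ≤ κ * (1 - ‖x‖)) :
    closedBall x r ⊆ unitDisk := by
  intro w hw
  have hx1 : ‖x‖ < 1 := mem_ball_zero_iff.1 hx
  rw [unitDisk, mem_ball_zero_iff]
  nlinarith [norm_sub_norm_le w x, mem_closedBall_iff_norm.1 hw,
    mul_pos (sub_pos.2 hκ) (sub_pos.2 hx1)]

lemma closedBall_subset_unitDisk_of_mem_admissiblePairs (hκ : κ < 1)
    (hp : p ∈ admissiblePairs u κ z) : closedBall p.1 p.2 ⊆ unitDisk :=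
  closedBall_subset_unitDisk hκ hp.1 hp.2.2.1

lemma circleIntegrable_of_mem_admissiblePairs (hκ : κ < 1) (hu : ContinuousOn u unitDisk)
    (hp : p ∈ admissiblePairs u κ z) : CircleIntegrable u p.1 p.2 :=
  (hu.mono (sphere_subset_closedBall.trans
    (closedBall_subset_unitDisk_of_mem_admissiblePairs hκ hp))).circleIntegrable hp.2.1.le

lemma abs_harmExt_le_of_mem_admissiblePairs (hκ : κ < 1) (hM : ∀ z ∈ unitDisk, |u z| ≤ M)
    (hu : ContinuousOn u unitDisk) (hp : p ∈ admissiblePairs u κ z) :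
    |harmExt u p.1 p.2 z| ≤ M :=
  abs_harmExt_le (mem_ball_iff_norm.2 hp.2.2.2.1) (circleIntegrable_of_mem_admissiblePairs hκ hu hp)
    fun ζ hζ ↦ hM ζ (closedBall_subset_unitDisk_of_mem_admissiblePairs hκ hp
      (sphere_subset_closedBall hζ))

lemma bddAbove_harmExt_image_admissiblePairs (hκ : κ < 1) (hM : ∀ z ∈ unitDisk, |u z| ≤ M)
    (hu : ContinuousOn u unitDisk) (z : ℂ) :
    BddAbove ((fun p : ℂ × ℝ ↦ harmExt u p.1 p.2 z) '' admissiblePairs u κ z) := by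
  refine ⟨M, ?_⟩
  rintro _ ⟨p, hp, rfl⟩
  exact (abs_le.1 (abs_harmExt_le_of_mem_admissiblePairs hκ hM hu hp)).2

lemma harmExt_le_vFun (hκ : κ < 1) (hM : ∀ z ∈ unitDisk, |u z| ≤ M)
    (hu : ContinuousOn u unitDisk) (hp : p ∈ admissiblePairs u κ z) :
    harmExt u p.1 p.2 z ≤ vFun u κ z :=
  le_csSup (bddAbove_harmExt_image_admissiblePairs hκ hM hu z) ⟨p, hp, rfl⟩

lemma exists_self_mem_admissiblePairs (hrmvp : RestrictedMeanValue κ u) (hz : z ∈ unitDisk) :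
    ∃ ρ : ℝ, (z, ρ) ∈ admissiblePairs u κ z ∧ harmExt u z ρ z = u z := by
  obtain ⟨ρ, hρ, hρκ, hmean⟩ := hrmvp z hz
  exact ⟨ρ, ⟨hz, hρ, hρκ, by simpa using hρ, hmean⟩, by rw [harmExt_self hρ.ne']; exact hmean.symm⟩

lemma u_le_vFun (hκ : κ < 1) (hM : ∀ z ∈ unitDisk, |u z| ≤ M) (hu : ContinuousOn u unitDisk)
    (hrmvp : RestrictedMeanValue κ u) (hz : z ∈ unitDisk) : u z ≤ vFun u κ z := by
  obtain ⟨ρ, hρ, hρu⟩ := exists_self_mem_admissiblePairs hrmvp hz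
  exact hρu ▸ harmExt_le_vFun hκ hM hu hρ

lemma abs_vFun_le (hκ : κ < 1) (hM : ∀ z ∈ unitDisk, |u z| ≤ M) (hu : ContinuousOn u unitDisk)
    (hrmvp : RestrictedMeanValue κ u) (hz : z ∈ unitDisk) : |vFun u κ z| ≤ M := by
  obtain ⟨ρ, hρ, -⟩ := exists_self_mem_admissiblePairs hrmvp hz
  refine abs_le.2 ⟨(abs_le.1 (hM z hz)).1.trans (u_le_vFun hκ hM hu hrmvp hz), ?_⟩
  refine csSup_le ⟨_, _, hρ, rfl⟩ ?_
  rintro _ ⟨p, hp, rfl⟩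
  exact (abs_le.1 (abs_harmExt_le_of_mem_admissiblePairs hκ hM hu hp)).2

lemma exists_subseq_tendsto_of_mem_admissiblePairs (hκ : κ < 1) {zs : ℕ → ℂ}
    {ps : ℕ → ℂ × ℝ} (hz : z ∈ unitDisk) (hzs : Tendsto zs atTop (𝓝 z))
    (hps : ∀ n, ps n ∈ admissiblePairs u κ (zs n)) :
    ∃ q : ℂ × ℝ, q.1 ∈ unitDisk ∧ q.2 ≤ κ * (1 - ‖q.1‖) ∧ ‖z - q.1‖ ≤ q.2 ∧
      ∃ φ : ℕ → ℕ, StrictMono φ ∧ Tendsto (ps ∘ φ) atTop (𝓝 q) := by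
  have hK (n : ℕ) : ps n ∈ closedBall (0 : ℂ) 1 ×ˢ Icc (0 : ℝ) 1 := by
    obtain ⟨hx, hr, hrκ, -, -⟩ := hps n
    have hx1 : ‖(ps n).1‖ < 1 := mem_ball_zero_iff.1 hx
    refine ⟨mem_closedBall_zero_iff.2 hx1.le, hr.le, ?_⟩
    nlinarith [mul_pos (sub_pos.2 hκ) (sub_pos.2 hx1), norm_nonneg (ps n).1]
  obtain ⟨⟨x₀, r₀⟩, hq, φ, hφ, hlim⟩ :=
    ((isCompact_closedBall _ _).prod isCompact_Icc).tendsto_subseq hK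
  have hx : Tendsto (fun n ↦ (ps (φ n)).1) atTop (𝓝 x₀) := (continuous_fst.tendsto _).comp hlim
  have hr : Tendsto (fun n ↦ (ps (φ n)).2) atTop (𝓝 r₀) := (continuous_snd.tendsto _).comp hlim
  have hdist : ‖z - x₀‖ ≤ r₀ := le_of_tendsto_of_tendsto' ((hzs.comp hφ.tendsto_atTop).sub hx).norm
    hr fun n ↦ (hps (φ n)).2.2.2.1.le
  have hrκ : r₀ ≤ κ * (1 - ‖x₀‖) :=
    le_of_tendsto_of_tendsto' hr (tendsto_const_nhds.mul (tendsto_const_nhds.sub hx.norm))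
      fun n ↦ (hps (φ n)).2.2.1
  refine ⟨(x₀, r₀), ?_, hrκ, hdist, φ, hφ, hlim⟩
  rw [unitDisk, mem_ball_zero_iff]
  by_contra! h1
  have hx₀1 : ‖x₀‖ = 1 := le_antisymm (mem_closedBall_zero_iff.1 hq.1) h1
  rw [hx₀1, sub_self, mul_zero] at hrκ
  have hzx : z = x₀ := sub_eq_zero.1 (norm_le_zero_iff.1 (hdist.trans hrκ))
  exact (mem_ball_zero_iff.1 hz).ne (hzx ▸ hx₀1)

/-- A limit pair `(x, r)` whose circle passes through the limit point `z` contributes `u z`, which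
is the value of the pair `(z, ρ(z))`. -/
lemma exists_subseq_tendsto_harmExt (hκ : κ < 1) (hu : ContinuousOn u unitDisk)
    (hrmvp : RestrictedMeanValue κ u) {zs : ℕ → ℂ} {ps : ℕ → ℂ × ℝ} (hz : z ∈ unitDisk)
    (hzs : Tendsto zs atTop (𝓝 z)) (hps : ∀ n, ps n ∈ admissiblePairs u κ (zs n)) :
    ∃ q ∈ admissiblePairs u κ z, ∃ φ : ℕ → ℕ, StrictMono φ ∧
      Tendsto (fun n ↦ harmExt u (ps (φ n)).1 (ps (φ n)).2 (zs (φ n))) atTop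
        (𝓝 (harmExt u q.1 q.2 z)) := by
  obtain ⟨⟨x₀, r₀⟩, hx₀, hrκ, hdist, φ, hφ, hlim⟩ :=
    exists_subseq_tendsto_of_mem_admissiblePairs hκ hz hzs hps
  have hx : Tendsto (fun n ↦ (ps (φ n)).1) atTop (𝓝 x₀) := (continuous_fst.tendsto _).comp hlim
  have hr : Tendsto (fun n ↦ (ps (φ n)).2) atTop (𝓝 r₀) := (continuous_snd.tendsto _).comp hlim
  have hzφ : Tendsto (fun n ↦ zs (φ n)) atTop (𝓝 z) := hzs.comp hφ.tendsto_atTop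
  have hball : closedBall x₀ r₀ ⊆ unitDisk := closedBall_subset_unitDisk hκ hx₀ hrκ
  have hmem (n : ℕ) : zs (φ n) ∈ ball (ps (φ n)).1 (ps (φ n)).2 ∧
      sphere (ps (φ n)).1 (ps (φ n)).2 ⊆ unitDisk :=
    ⟨mem_ball_iff_norm.2 (hps _).2.2.2.1, sphere_subset_closedBall.trans
      (closedBall_subset_unitDisk_of_mem_admissiblePairs hκ (hps _))⟩
  rcases hdist.lt_or_eq with hlt | heq
  · have hr₀ : 0 < r₀ := (norm_nonneg _).trans_lt hlt
    have hmean : u x₀ = circleAvg u x₀ r₀ :=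
      eq_circleAverage_of_tendsto isOpen_ball hu hx hr hr₀ hball
        (Filter.Eventually.of_forall fun n ↦ ⟨(hps (φ n)).2.1,
          sphere_subset_closedBall.trans (closedBall_subset_unitDisk_of_mem_admissiblePairs hκ
            (hps _)), (hps (φ n)).2.2.2.2⟩)
    exact ⟨(x₀, r₀), ⟨hx₀, hr₀, hrκ, hlt, hmean⟩, φ, hφ, tendsto_harmExt hu hx hr hzφ
      (mem_ball_iff_norm.2 hlt) (sphere_subset_closedBall.trans hball)
      (Filter.Eventually.of_forall hmem)⟩
  · obtain ⟨ρ, hρ, hρu⟩ := exists_self_mem_admissiblePairs hrmvp hz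
    exact ⟨(z, ρ), hρ, φ, hφ, hρu ▸ tendsto_harmExt_of_norm_sub_eq isOpen_ball hu hx hr hzφ heq
      hball (Filter.Eventually.of_forall fun n ↦ (hmem n).1)⟩

lemma exists_vFun_eq_harmExt (hκ : κ < 1) (hM : ∀ z ∈ unitDisk, |u z| ≤ M)
    (hu : ContinuousOn u unitDisk) (hrmvp : RestrictedMeanValue κ u) (hz : z ∈ unitDisk) :
    ∃ p ∈ admissiblePairs u κ z, vFun u κ z = harmExt u p.1 p.2 z := by
  obtain ⟨ρ, hρ, -⟩ := exists_self_mem_admissiblePairs hrmvp hz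
  obtain ⟨y, -, hy, hyv⟩ := exists_seq_tendsto_sSup
    (⟨_, _, hρ, rfl⟩ : ((fun p : ℂ × ℝ ↦ harmExt u p.1 p.2 z) '' admissiblePairs u κ z).Nonempty)
    (bddAbove_harmExt_image_admissiblePairs hκ hM hu z)
  choose ps hps hpsy using hyv
  obtain ⟨q, hq, φ, hφ, hlim⟩ :=
    exists_subseq_tendsto_harmExt hκ hu hrmvp hz tendsto_const_nhds hps
  exact ⟨q, hq, tendsto_nhds_unique (hy.comp hφ.tendsto_atTop) (hlim.congr fun n ↦ hpsy (φ n))⟩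

lemma lowerSemicontinuousAt_vFun (hκ : κ < 1) (hM : ∀ z ∈ unitDisk, |u z| ≤ M)
    (hu : ContinuousOn u unitDisk) (hrmvp : RestrictedMeanValue κ u) (hz : z ∈ unitDisk) :
    LowerSemicontinuousAt (vFun u κ) z := by
  obtain ⟨p, hp, hpv⟩ := exists_vFun_eq_harmExt hκ hM hu hrmvp hz
  have hpz : z ∈ ball p.1 p.2 := mem_ball_iff_norm.2 hp.2.2.2.1
  have hsph : sphere p.1 p.2 ⊆ unitDisk :=
    sphere_subset_closedBall.trans (closedBall_subset_unitDisk_of_mem_admissiblePairs hκ hp)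
  have hlim : Tendsto (harmExt u p.1 p.2) (𝓝 z) (𝓝 (harmExt u p.1 p.2 z)) :=
    tendsto_harmExt hu tendsto_const_nhds tendsto_const_nhds tendsto_id hpz hsph
      (Filter.eventually_of_mem (isOpen_ball.mem_nhds hpz) fun w hw ↦ ⟨hw, hsph⟩)
  intro y hy
  rw [hpv] at hy
  filter_upwards [hlim.eventually_const_lt hy, isOpen_ball.mem_nhds hpz] with w hw hwp
  exact hw.trans_le (harmExt_le_vFun hκ hM hu
    ⟨hp.1, hp.2.1, hp.2.2.1, mem_ball_iff_norm.1 hwp, hp.2.2.2.2⟩)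

lemma upperSemicontinuousAt_vFun (hκ : κ < 1) (hM : ∀ z ∈ unitDisk, |u z| ≤ M)
    (hu : ContinuousOn u unitDisk) (hrmvp : RestrictedMeanValue κ u) (hz : z ∈ unitDisk) :
    UpperSemicontinuousAt (vFun u κ) z := by
  intro y hy
  by_contra h
  obtain ⟨ws, hws, hw⟩ := exists_seq_forall_of_frequently
    ((Filter.not_eventually.1 h).and_eventually (isOpen_ball.mem_nhds hz))
  choose ps hps hpsv using fun n ↦ exists_vFun_eq_harmExt hκ hM hu hrmvp (hw n).2
  obtain ⟨q, hq, φ, hφ, hlim⟩ := exists_subseq_tendsto_harmExt hκ hu hrmvp hz hws hps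
  have hge : y ≤ harmExt u q.1 q.2 z :=
    ge_of_tendsto hlim (Filter.Eventually.of_forall fun n ↦ hpsv (φ n) ▸ not_lt.1 (hw (φ n)).1)
  exact (hge.trans (harmExt_le_vFun hκ hM hu hq)).not_gt hy

lemma continuousOn_vFun (hκ : κ < 1) (hM : ∀ z ∈ unitDisk, |u z| ≤ M)
    (hu : ContinuousOn u unitDisk) (hrmvp : RestrictedMeanValue κ u) :
    ContinuousOn (vFun u κ) unitDisk := fun _ hz ↦
  (continuousAt_iff_lower_upperSemicontinuousAt.2 ⟨lowerSemicontinuousAt_vFun hκ hM hu hrmvp hz,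
    upperSemicontinuousAt_vFun hκ hM hu hrmvp hz⟩).continuousWithinAt

/-- Inequality (3.2): on small circles `v` dominates the harmonic function `h_{x,r}` attaining
`v z`, whose circle average is its value at the center. -/
lemma exists_vFun_le_circleAverage (hκ : κ < 1) (hM : ∀ z ∈ unitDisk, |u z| ≤ M)
    (hu : ContinuousOn u unitDisk) (hrmvp : RestrictedMeanValue κ u) (hz : z ∈ unitDisk) :
    ∃ t₀ > 0, ∀ t ∈ Ioo 0 t₀, vFun u κ z ≤ circleAverage (vFun u κ) z t := by
  obtain ⟨p, hp, hpv⟩ := exists_vFun_eq_harmExt hκ hM hu hrmvp hz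
  have hint := circleIntegrable_of_mem_admissiblePairs hκ hu hp
  have hpD := closedBall_subset_unitDisk_of_mem_admissiblePairs hκ hp
  refine ⟨p.2 - ‖z - p.1‖, sub_pos.2 hp.2.2.2.1, fun t ⟨ht, htp⟩ ↦ ?_⟩
  have hsub : closedBall z t ⊆ ball p.1 p.2 :=
    closedBall_subset_ball' (by rw [dist_eq_norm]; linarith)
  have hsph : sphere z t ⊆ ball p.1 p.2 := sphere_subset_closedBall.trans hsub
  rw [hpv, harmExt_eq_circleAverage hint ht.le hsub]
  refine circleAverage_mono (((harmonicOnNhd_harmExt hint).continuousOn.mono hsph).circleIntegrable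
    ht.le) (((continuousOn_vFun hκ hM hu hrmvp).mono
      (hsph.trans (ball_subset_closedBall.trans hpD))).circleIntegrable ht.le) fun w hw ↦ ?_
  rw [abs_of_pos ht] at hw
  exact harmExt_le_vFun hκ hM hu ⟨hp.1, hp.2.1, hp.2.2.1, mem_ball_iff_norm.1 (hsph hw), hp.2.2.2.2⟩

/-- `v - h`, with `h` the Poisson integral of `v` over `∂B(z, s)`, has the local sub-mean value
property in `B(z, s)` and tends to `0` at its boundary, so it is nonpositive. -/
lemma vFun_le_circleAverage {s : ℝ} (hκ : κ < 1) (hM : ∀ z ∈ unitDisk, |u z| ≤ M)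
    (hu : ContinuousOn u unitDisk) (hrmvp : RestrictedMeanValue κ u) (hs : 0 < s)
    (hsub : closedBall z s ⊆ unitDisk) :
    vFun u κ z ≤ circleAverage (vFun u κ) z s := by
  set v := vFun u κ
  have hv : ContinuousOn v unitDisk := continuousOn_vFun hκ hM hu hrmvp
  have hvint : CircleIntegrable v z s :=
    (hv.mono (sphere_subset_closedBall.trans hsub)).circleIntegrable hs.le
  have hvM (w) (hw : w ∈ closedBall z s) : |v w| ≤ M := abs_vFun_le hκ hM hu hrmvp (hsub hw)
  have hG : ContinuousOn (harmExt v z s) (ball z s) := (harmonicOnNhd_harmExt hvint).continuousOn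
  have hW := nonpos_of_tendsto_sphere (W := fun w ↦ v w - harmExt v z s w) (c := z) (s := s)
    ?cont ?bdd ?sub ?bdry z (mem_ball_self hs)
  · rw [← harmExt_self hs.ne']
    exact sub_nonpos.1 hW
  case cont => exact (hv.mono (ball_subset_closedBall.trans hsub)).sub hG
  case bdd =>
    refine ⟨2 * M, ?_⟩
    rintro _ ⟨w, hw, rfl⟩
    have h1 := abs_le.1 (hvM w (ball_subset_closedBall hw))
    have h2 := abs_le.1 (abs_harmExt_le hw hvint fun ζ hζ ↦ hvM ζ (sphere_subset_closedBall hζ))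
    dsimp only
    linarith
  case sub =>
    intro a ha
    obtain ⟨t₀, ht₀, hva⟩ :=
      exists_vFun_le_circleAverage hκ hM hu hrmvp (hsub (ball_subset_closedBall ha))
    refine ⟨min t₀ (s - dist a z), lt_min ht₀ (sub_pos.2 ha), fun t ⟨ht, htlt⟩ ↦ ?_⟩
    have hsubt : closedBall a t ⊆ ball z s :=
      closedBall_subset_ball' (by linarith [min_le_right t₀ (s - dist a z)])
    have hsph := sphere_subset_closedBall.trans hsubt
    have hvt : CircleIntegrable v a t :=
      (hv.mono (hsph.trans (ball_subset_closedBall.trans hsub))).circleIntegrable ht.le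
    rw [circleAverage_fun_sub hvt ((hG.mono hsph).circleIntegrable ht.le),
      ← harmExt_eq_circleAverage hvint ht.le hsubt]
    linarith [hva t ⟨ht, htlt.trans_le (min_le_left _ _)⟩]
  case bdry =>
    intro ζ hζ
    have hv' : Tendsto v (𝓝[ball z s] ζ) (𝓝 (v ζ)) :=
      (hv.continuousAt (isOpen_ball.mem_nhds (hsub (sphere_subset_closedBall hζ)))).tendsto
        |>.mono_left nhdsWithin_le_nhds
    simpa using hv'.sub (tendsto_harmExt_nhdsWithin_ball isOpen_ball hv hsub hζ)

end AuxiliaryFunction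

theorem aux_function_v_properties_general (κ : ℝ) (hκ1 : κ < 1) (u : ℂ → ℝ)
    (hbd : ∃ M : ℝ, ∀ z ∈ unitDisk, |u z| ≤ M)
    (hcont : ContinuousOn u unitDisk)
    (hrmvp : ∀ z ∈ unitDisk, ∃ ρ : ℝ, 0 < ρ ∧ ρ ≤ κ * (1 - ‖z‖) ∧
      u z = circleAvg u z ρ) :
    (∀ z ∈ unitDisk, ∃ p ∈ admissiblePairs u κ z, vFun u κ z = harmExt u p.1 p.2 z) ∧
    (∀ z ∈ unitDisk, u z ≤ vFun u κ z) ∧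
    (∃ M : ℝ, ∀ z ∈ unitDisk, |vFun u κ z| ≤ M) ∧
    ContinuousOn (vFun u κ) unitDisk ∧
    (∀ z ∈ unitDisk, ∀ s : ℝ, 0 < s → Metric.closedBall z s ⊆ unitDisk →
      vFun u κ z ≤ circleAvg (vFun u κ) z s) := by
  obtain ⟨M, hM⟩ := hbd
  exact ⟨fun z hz ↦ exists_vFun_eq_harmExt hκ1 hM hcont hrmvp hz,
    fun z hz ↦ u_le_vFun hκ1 hM hcont hrmvp hz,
    ⟨M, fun z hz ↦ abs_vFun_le hκ1 hM hcont hrmvp hz⟩,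
    continuousOn_vFun hκ1 hM hcont hrmvp,
    fun z _ s hs hsub ↦ vFun_le_circleAverage hκ1 hM hcont hrmvp hs hsub⟩

/-- properties of the auxiliary function `v`, for the unit
disk: if `u : D → ℝ` is bounded, continuous and satisfies the restricted mean
value property on circles of radius `ρ(z) ≤ κ(1-|z|)` with `0 < κ < 1`, then
(a) the supremum defining `v` is attained at every `z ∈ D`; (b) `u ≤ v` on
`D`; (c) `v` is bounded on `D`; (d) `v` is continuous on `D`; and (e) `v`
satisfies the sub-mean value property on every circle whose closed disk lies
in `D` (i.e. `v` is subharmonic in `D`). -/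
theorem aux_function_v_properties (κ : ℝ) (hκ0 : 0 < κ) (hκ1 : κ < 1) (u : ℂ → ℝ)
    (hbd : ∃ M : ℝ, ∀ z ∈ unitDisk, |u z| ≤ M)
    (hcont : ContinuousOn u unitDisk)
    (hrmvp : ∀ z ∈ unitDisk, ∃ ρ : ℝ, 0 < ρ ∧ ρ ≤ κ * (1 - ‖z‖) ∧
      u z = circleAvg u z ρ) :
    (∀ z ∈ unitDisk, ∃ p ∈ admissiblePairs u κ z, vFun u κ z = harmExt u p.1 p.2 z) ∧
    (∀ z ∈ unitDisk, u z ≤ vFun u κ z) ∧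
    (∃ M : ℝ, ∀ z ∈ unitDisk, |vFun u κ z| ≤ M) ∧
    ContinuousOn (vFun u κ) unitDisk ∧
    (∀ z ∈ unitDisk, ∀ s : ℝ, 0 < s → Metric.closedBall z s ⊆ unitDisk →
      vFun u κ z ≤ circleAvg (vFun u κ) z s) :=
  aux_function_v_properties_general κ hκ1 u hbd hcont hrmvp
end

section
/- Let D = {z ∈ ℂ : |z| < 1} be the open unit disk, let α > 0, and fix κ with 0 < κ < α/(4+α). Let u : D → ℝ be a bounded continuous function such that for every z ∈ D there exists ρ(z) with 0 < ρ(z) ≤ κ·(1−|z|) and u(z) = (1/2π)∫₀^{2π} u(z + ρ(z)e^{iθ}) dθ. Define v(z) := sup over pairs (x,r) with x ∈ D, 0 < r ≤ κ·(1−|x|), |z − x| < r, u(x) = (1/2π)∫₀^{2π} u(x + re^{iθ}) dθ, of h_{x,r}(z), where h_{x,r}(z) = (1/2π)∫₀^{2π} u(x + re^{iθ})·(r² − |z − x|²)/|x + re^{iθ} − z|² dθ. Let ξ ∈ ∂D be a boundary point such that u(z) → u_ξ as z → ξ with z constrained to the non-tangential cone Γ_α(ξ) := {p ∈ D : |ξ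 − p| ≤ (1+α)(1−|p|)}. Then for every sequence (z_n) in D with z_n → ξ and |ξ − z_n|/(1 − |z_n|) → 1, one has v(z_n) → u_ξ. -/
/-!
Each `h_{x,r}(z)` is the average of `u` over `∂B(x,r)` against the Poisson kernel, a nonnegative
weight of total mass one, so it is within `ε` of `u_ξ` as soon as `|u - u_ξ| ≤ ε` on that circle.
If `|ξ - z| ≤ λ(1 - |z|)` and `(x,r)` is admissible for `z`, then with `s = 1 - |x|` every point
`p` of `∂B(x,r)` satisfies `(1-κ)s ≤ 1 - |p|` and `|ξ - p| ≤ (λ(1+κ) + 2κ)s`. Since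
`κ < α/(4+α)` means `1 + 3κ < (1+α)(1-κ)`, some `λ > 1` gives `λ(1+κ) + 2κ ≤ (1+α)(1-κ)`, and then
the circle lies in `Γ_α(ξ)` within distance `(1+α)(1 - |z|)` of `ξ`. Along a normally converging
sequence this holds eventually, so all the `h_{x,r}(z_n)` are close to `u_ξ`; the family is
nonempty by the restricted mean value property at `z_n`, so its supremum `v(z_n)` is close to
`u_ξ` as well.
-/

open MeasureTheory Metric Complex Filter

/-- The non-tangential cone `Γ_α(ξ) = {p ∈ D : |ξ - p| ≤ (1+α)(1-|p|)}`
with vertex `ξ ∈ ∂D` and aperture parameter `α > 0`. -/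
def ntCone (α : ℝ) (ξ : ℂ) : Set ℂ :=
  {p ∈ unitDisk | ‖ξ - p‖ ≤ (1 + α) * (1 - ‖p‖)}

section PoissonKernel

variable {c w : ℂ} {R : ℝ}

theorem circleAverage_poissonKernel_s14 (hw : w ∈ ball c R) :
    Real.circleAverage (poissonKernel c w) c R = 1 := by
  simpa [Pi.mul_def] using
    (InnerProductSpace.harmonicOnNhd_const (1 : ℝ)).circleAverage_poissonKernel_smul hw

theorem poissonKernel_nonneg_s14 (hw : w ∈ ball c R) {z : ℂ} (hz : z ∈ sphere c R) :
    0 ≤ poissonKernel c w z := by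
  rw [poissonKernel_def, mem_sphere_iff_norm.1 hz]
  have := mem_ball_iff_norm.1 hw
  exact div_nonneg (by nlinarith [norm_nonneg (w - c)]) (sq_nonneg _)

theorem continuousOn_poissonKernel_sphere (hw : w ∈ ball c R) :
    ContinuousOn (poissonKernel c w) (sphere c |R|) := by
  rw [poissonKernel_eq_re_herglotzRieszKernel]
  exact continuous_re.comp_continuousOn (continuousOn_herglotzRieszKernel_sphere hw)

theorem abs_circleAverage_poissonKernel_smul_sub_le {f : ℂ → ℝ} {a ε : ℝ}
    (hw : w ∈ ball c R) (hf : ContinuousOn f (sphere c R))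
    (hfa : ∀ z ∈ sphere c R, |f z - a| ≤ ε) :
    |Real.circleAverage (poissonKernel c w • f) c R - a| ≤ ε := by
  have hR : |R| = R := abs_of_pos (pos_of_mem_ball hw)
  have hP := continuousOn_poissonKernel_sphere hw
  rw [hR] at hP
  have hPf : CircleIntegrable (poissonKernel c w • f) c R :=
    (hP.smul hf).circleIntegrable (pos_of_mem_ball hw).le
  have hconst : ∀ b : ℝ, CircleIntegrable (fun z ↦ b * poissonKernel c w z) c R := fun b ↦
    (continuousOn_const.mul hP).circleIntegrable (pos_of_mem_ball hw).le
  have avg_const : ∀ b : ℝ, Real.circleAverage (fun z ↦ b * poissonKernel c w z) c R = b :=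
    fun b ↦ by
      simpa [circleAverage_poissonKernel_s14 hw] using
        Real.circleAverage_fun_smul (f := poissonKernel c w) (c := c) (R := R) (a := b)
  have hPnn : ∀ z ∈ sphere c |R|, 0 ≤ poissonKernel c w z := fun z hz ↦
    poissonKernel_nonneg_s14 hw (hR ▸ hz)
  have hbound : ∀ z ∈ sphere c |R|, a - ε ≤ f z ∧ f z ≤ a + ε := fun z hz ↦ by
    have := abs_le.1 (hfa z (hR ▸ hz))
    constructor <;> linarith
  have lower := Real.circleAverage_mono (hconst (a - ε)) hPf fun z hz ↦ by
    simpa [mul_comm] using mul_le_mul_of_nonneg_left (hbound z hz).1 (hPnn z hz)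
  have upper := Real.circleAverage_mono hPf (hconst (a + ε)) fun z hz ↦ by
    simpa [mul_comm] using mul_le_mul_of_nonneg_left (hbound z hz).2 (hPnn z hz)
  rw [avg_const] at lower upper
  exact abs_sub_le_iff.2 ⟨by linarith, by linarith⟩

end PoissonKernel

theorem harmExt_eq_circleAverage_s14 (u : ℂ → ℝ) (x z : ℂ) {r : ℝ} (hr : 0 ≤ r) :
    harmExt u x r z = Real.circleAverage (poissonKernel x z • u) x r := by
  rw [harmExt, Real.circleAverage_def, smul_eq_mul]
  congr 1
  refine intervalIntegral.integral_congr fun θ _ ↦ ?_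
  simp only [Pi.smul_apply', smul_eq_mul, poissonKernel_def, circleMap, add_sub_cancel_left,
    norm_mul, Complex.norm_real, Real.norm_eq_abs, abs_of_nonneg hr,
    Complex.norm_exp_ofReal_mul_I, mul_one]
  rw [mul_comm, sub_sub_eq_add_sub, add_comm _ x]

theorem abs_harmExt_sub_le_s14 {u : ℂ → ℝ} {x z : ℂ} {r a ε : ℝ} (hz : z ∈ ball x r)
    (hu : ContinuousOn u (sphere x r)) (hua : ∀ p ∈ sphere x r, |u p - a| ≤ ε) :
    |harmExt u x r z - a| ≤ ε := by
  rw [harmExt_eq_circleAverage_s14 u x z (pos_of_mem_ball hz).le]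
  exact abs_circleAverage_poissonKernel_smul_sub_le hz hu hua

theorem mem_admissiblePairs_self {u : ℂ → ℝ} {κ ρ : ℝ} {z : ℂ} (hz : z ∈ unitDisk) (hρ : 0 < ρ)
    (hρκ : ρ ≤ κ * (1 - ‖z‖)) (hmean : u z = circleAvg u z ρ) :
    (z, ρ) ∈ admissiblePairs u κ z :=
  ⟨hz, hρ, hρκ, by simpa using hρ, hmean⟩

theorem abs_vFun_sub_le {u : ℂ → ℝ} {κ a ε : ℝ} {z : ℂ} (hne : (admissiblePairs u κ z).Nonempty)
    (h : ∀ p ∈ admissiblePairs u κ z, |harmExt u p.1 p.2 z - a| ≤ ε) :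
    |vFun u κ z - a| ≤ ε := by
  set S := (fun p : ℂ × ℝ ↦ harmExt u p.1 p.2 z) '' admissiblePairs u κ z
  have hS : ∀ y ∈ S, a - ε ≤ y ∧ y ≤ a + ε := by
    rintro _ ⟨p, hp, rfl⟩
    have := abs_le.1 (h p hp)
    constructor <;> linarith
  obtain ⟨y, hy⟩ := hne.image _
  have upper : vFun u κ z ≤ a + ε := csSup_le ⟨y, hy⟩ fun y hy ↦ (hS y hy).2
  have lower : a - ε ≤ vFun u κ z :=
    (hS y hy).1.trans (le_csSup ⟨a + ε, fun y hy ↦ (hS y hy).2⟩ hy)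
  exact abs_le.2 ⟨by linarith, by linarith⟩

theorem sphere_subset_ntCone_inter_closedBall {α κ l : ℝ} (hκ : κ < 1)
    (hl : l * (1 + κ) + 2 * κ ≤ (1 + α) * (1 - κ)) {ξ z x : ℂ} {r : ℝ} (hx : x ∈ unitDisk)
    (hrκ : r ≤ κ * (1 - ‖x‖)) (hzx : ‖z - x‖ < r) (hz : ‖ξ - z‖ ≤ l * (1 - ‖z‖)) :
    sphere x r ⊆ ntCone α ξ ∩ closedBall ξ ((1 + α) * (1 - ‖z‖)) := by
  intro p hp
  rw [mem_sphere_iff_norm] at hp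
  have hx1 : ‖x‖ < 1 := by simpa [unitDisk] using hx
  set s := 1 - ‖x‖
  have hκ0 : 0 < κ := by nlinarith [norm_nonneg (z - x)]
  have hp_bd : (1 - κ) * s ≤ 1 - ‖p‖ := by nlinarith [norm_le_norm_add_norm_sub' p x]
  have hz_lo : (1 - κ) * s ≤ 1 - ‖z‖ := by nlinarith [norm_le_norm_add_norm_sub' z x]
  have hz_hi : 1 - ‖z‖ ≤ (1 + κ) * s := by
    nlinarith [norm_le_norm_add_norm_sub' x z, norm_sub_rev x z]
  have hl0 : 0 ≤ l := by
    have : 0 < 1 - ‖z‖ := by nlinarith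
    nlinarith [norm_nonneg (ξ - z)]
  have hξp : ‖ξ - p‖ ≤ (1 + α) * (1 - κ) * s := by
    have := norm_sub_le_norm_sub_add_norm_sub ξ z p
    have := norm_sub_le_norm_sub_add_norm_sub z x p
    have : ‖ξ - z‖ ≤ l * ((1 + κ) * s) := hz.trans (by gcongr)
    nlinarith [norm_sub_rev x p]
  have hα : 0 ≤ 1 + α := by nlinarith
  refine ⟨⟨?_, ?_⟩, ?_⟩
  · simp only [unitDisk, mem_ball_zero_iff]; nlinarith
  · nlinarith
  · rw [mem_closedBall, dist_comm, dist_eq_norm]; nlinarith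

theorem exists_one_lt_mul_add_le {α κ : ℝ} (hα : 0 < α) (hκ0 : 0 < κ) (hκ : κ < α / (4 + α)) :
    ∃ l, 1 < l ∧ l * (1 + κ) + 2 * κ ≤ (1 + α) * (1 - κ) := by
  have h4α : 0 < 4 + α := by linarith
  refine ⟨((1 + α) * (1 - κ) - 2 * κ) / (1 + κ), ?_, ?_⟩
  · rw [one_lt_div (by linarith)]
    rw [lt_div_iff₀ h4α] at hκ
    linarith
  · rw [div_mul_cancel₀ _ (by linarith)]
    linarith

theorem v_normal_limit_from_nontangential_limit_general (α κ : ℝ) (hα : 0 < α)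
    (hκ0 : 0 < κ) (hκ : κ < α / (4 + α)) (u : ℂ → ℝ)
    (hcont : ContinuousOn u unitDisk)
    (hrmvp : ∀ z ∈ unitDisk, ∃ ρ : ℝ, 0 < ρ ∧ ρ ≤ κ * (1 - ‖z‖) ∧
      u z = circleAvg u z ρ)
    (ξ : ℂ) (hξ : ‖ξ‖ = 1) (uξ : ℝ)
    (hlim : Tendsto u (nhdsWithin ξ (ntCone α ξ)) (nhds uξ)) :
    ∀ z : ℕ → ℂ, (∀ n, z n ∈ unitDisk) → Tendsto z atTop (nhds ξ) →
      Tendsto (fun n => ‖ξ - z n‖ / (1 - ‖z n‖)) atTop (nhds 1) →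
      Tendsto (fun n => vFun u κ (z n)) atTop (nhds uξ) := by
  intro z hzD hzξ hratio
  have hκ1 : κ < 1 := hκ.trans ((div_lt_one (by linarith)).2 (by linarith))
  obtain ⟨l, hl1, hl⟩ := exists_one_lt_mul_add_le hα hκ0 hκ
  refine Metric.tendsto_nhds.2 fun ε hε ↦ ?_
  obtain ⟨δ, hδ, hu⟩ := Metric.tendsto_nhdsWithin_nhds.1 hlim (ε / 2) (half_pos hε)
  have h_normal : ∀ᶠ n in atTop, ‖ξ - z n‖ ≤ l * (1 - ‖z n‖) := by
    filter_upwards [hratio.eventually (eventually_lt_nhds hl1)] with n hn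
    have : 0 < 1 - ‖z n‖ := by simpa [unitDisk] using hzD n
    exact ((div_lt_iff₀ this).1 hn).le
  have h_near : ∀ᶠ n in atTop, (1 + α) * (1 - ‖z n‖) < δ := by
    have : Tendsto (fun n ↦ (1 + α) * (1 - ‖z n‖)) atTop (nhds 0) := by
      simpa [hξ] using (tendsto_const_nhds (x := 1 + α)).mul
        ((tendsto_const_nhds (x := (1 : ℝ))).sub hzξ.norm)
    exact this.eventually (eventually_lt_nhds hδ)
  filter_upwards [h_normal, h_near] with n hn hnδ
  obtain ⟨ρ, hρ, hρκ, hmean⟩ := hrmvp (z n) (hzD n)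
  refine lt_of_le_of_lt ?_ (half_lt_self hε)
  rw [Real.dist_eq]
  refine abs_vFun_sub_le ⟨_, mem_admissiblePairs_self (hzD n) hρ hρκ hmean⟩ ?_
  rintro ⟨x, r⟩ ⟨hx, -, hrκ, hzx, -⟩
  have hsub := sphere_subset_ntCone_inter_closedBall hκ1 hl hx hrκ hzx hn
  refine abs_harmExt_sub_le_s14 (mem_ball_iff_norm.2 hzx)
    (hcont.mono fun p hp ↦ (hsub hp).1.1) fun p hp ↦ ?_
  rw [← Real.dist_eq]
  exact (hu (hsub hp).1 ((mem_closedBall.1 (hsub hp).2).trans_lt hnδ)).le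

/-- let `u : D → ℝ` be bounded, continuous, satisfying the
restricted mean value property on circles of radius `ρ(z) ≤ κ(1-|z|)` with
`0 < κ < α/(4+α)`, and let `ξ ∈ ∂D` be such that `u(z) → u_ξ` as `z → ξ`
inside the non-tangential cone `Γ_α(ξ)`.  Then `v(z_n) → u_ξ` along every
sequence `(z_n)` converging normally to `ξ`, i.e. `z_n → ξ` with
`|ξ - z_n|/(1 - |z_n|) → 1`. -/
theorem v_normal_limit_from_nontangential_limit (α κ : ℝ) (hα : 0 < α)
    (hκ0 : 0 < κ) (hκ : κ < α / (4 + α)) (u : ℂ → ℝ)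
    (hbd : ∃ M : ℝ, ∀ z ∈ unitDisk, |u z| ≤ M)
    (hcont : ContinuousOn u unitDisk)
    (hrmvp : ∀ z ∈ unitDisk, ∃ ρ : ℝ, 0 < ρ ∧ ρ ≤ κ * (1 - ‖z‖) ∧
      u z = circleAvg u z ρ)
    (ξ : ℂ) (hξ : ‖ξ‖ = 1) (uξ : ℝ)
    (hlim : Tendsto u (nhdsWithin ξ (ntCone α ξ)) (nhds uξ)) :
    ∀ z : ℕ → ℂ, (∀ n, z n ∈ unitDisk) → Tendsto z atTop (nhds ξ) →
      Tendsto (fun n => ‖ξ - z n‖ / (1 - ‖z n‖)) atTop (nhds 1) →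
      Tendsto (fun n => vFun u κ (z n)) atTop (nhds uξ) :=
  v_normal_limit_from_nontangential_limit_general α κ hα hκ0 hκ u hcont hrmvp ξ hξ uξ hlim
end
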